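/- Let p be a prime. For every k with 1 ≤ k ≤ p-1, the Gaussian q-binomial coefficient satisfies binom_q(p−1+k, k) ≡ ([p]_q/[k]_q) · (1 + [p]_q · ∑_{j=1}^{k-1} q^j/[j]_q) (mod [p]_q^3). -/

import Mathlib

open Polynomial Finset

noncomputable section

/-- The `q`-integer `[n]_q = 1 + q + ⋯ + q^(n-1)`, as a polynomial in `ℚ[q]`. -/
def qIntP (n : ℕ) : Polynomial ℚ := ∑ i ∈ Finset.range n, X ^ i

/-- The `q`-integer `[n]_q` viewed in the field of rational functions `ℚ(q)`. -/
def qN (n : ℕ) : RatFunc ℚ := algebraMap (Polynomial ℚ) (RatFunc ℚ) (qIntP n)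

/-- The `q`-Pochhammer symbol `(q; q)_n = ∏_{j=1}^{n} (1 - q^j)` in `ℚ(q)`. -/
def qqPoch (n : ℕ) : RatFunc ℚ :=
  algebraMap (Polynomial ℚ) (RatFunc ℚ) (∏ j ∈ Finset.range n, (1 - X ^ (j + 1)))

/-- The `q`-Pochhammer symbol `(-q; q)_n = ∏_{j=1}^{n} (1 + q^j)` in `ℚ(q)`. -/
def nqPoch (n : ℕ) : RatFunc ℚ :=
  algebraMap (Polynomial ℚ) (RatFunc ℚ) (∏ j ∈ Finset.range n, (1 + X ^ (j + 1)))

/-- The Gaussian `q`-binomial coefficient, as a rational function. -/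
def qbin (n k : ℕ) : RatFunc ℚ :=
  if k ≤ n then qqPoch n / (qqPoch k * qqPoch (n - k)) else 0

/-- `qCong p r x y` means `x ≡ y (mod [p]_q^r)`: the difference `x - y` can be
written as a fraction whose numerator (a polynomial) is divisible by `[p]_q^r`
and whose denominator is relatively prime to `[p]_q`. -/
def qCong (p r : ℕ) (x y : RatFunc ℚ) : Prop :=
  ∃ a b : Polynomial ℚ, IsCoprime b (qIntP p) ∧
    (x - y) * algebraMap (Polynomial ℚ) (RatFunc ℚ) b =
      algebraMap (Polynomial ℚ) (RatFunc ℚ) (qIntP p ^ r * a)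

/-! Since `1 - q^(p+j) = (1 - q)([j]_q + q^j [p]_q)`, the `q`-binomial equals
`([p]_q / [k]_q) ∏_{j=1}^{k-1} (1 + [p]_q q^j / [j]_q)`. Expanding the product to first order in
`[p]_q` leaves `[p]_q³` times a fraction with denominator `[k]_q ∏_{j<k} [j]_q`, which is prime
to `[p]_q = Φ_p(q)`: the cyclotomic polynomial is irreducible of degree `p - 1`, larger than the
degree of any `[j]_q` with `j < p`. -/

theorem Finset.exists_prod_add_mul_eq {ι R : Type*} [DecidableEq ι] [CommRing R] (s : Finset ι)
    (a b : ι → R) (m : R) :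
    ∃ c, ∏ i ∈ s, (a i + m * b i) =
      ∏ i ∈ s, a i + m * ∑ j ∈ s, b j * ∏ i ∈ s.erase j, a i + m ^ 2 * c := by
  induction s using Finset.induction_on with
  | empty => exact ⟨0, by simp⟩
  | @insert x s hx ih =>
    obtain ⟨c, hc⟩ := ih
    refine ⟨b x * ∑ j ∈ s, b j * ∏ i ∈ s.erase j, a i + (a x + m * b x) * c, ?_⟩
    have herase : ∀ j ∈ s, ∏ i ∈ (insert x s).erase j, a i = a x * ∏ i ∈ s.erase j, a i :=
      fun j hj => by
        rw [erase_insert_of_ne (ne_of_mem_of_not_mem hj hx).symm,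
          prod_insert fun h => hx (mem_of_mem_erase h)]
    rw [prod_insert hx, prod_insert hx, sum_insert hx, erase_insert hx,
      sum_congr rfl fun j hj => by rw [herase j hj], hc]
    simp only [mul_left_comm _ (a x), ← mul_sum]
    ring

theorem Finset.sum_div_mul_prod {ι K : Type*} [DecidableEq ι] [Field K] (s : Finset ι)
    (f g : ι → K) (hg : ∀ i ∈ s, g i ≠ 0) :
    (∑ i ∈ s, f i / g i) * ∏ i ∈ s, g i = ∑ i ∈ s, f i * ∏ j ∈ s.erase i, g j := by
  rw [sum_mul]
  refine sum_congr rfl fun i hi => ?_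
  rw [← mul_prod_erase s g hi]
  field_simp [hg i hi]

local notation "FF" => algebraMap ℚ[X] (RatFunc ℚ)

theorem one_sub_X_mul_qIntP (n : ℕ) : (1 - X) * qIntP n = 1 - X ^ n :=
  mul_neg_geom_sum X n

theorem qIntP_add (m n : ℕ) : qIntP (m + n) = qIntP m + X ^ m * qIntP n := by
  simp only [qIntP, sum_range_add, mul_sum, pow_add]

theorem qIntP_zero : qIntP 0 = 0 := sum_range_zero _

theorem qIntP_ne_zero {n : ℕ} (hn : n ≠ 0) : qIntP n ≠ 0 := fun h => by
  simpa [qIntP, eval_finsetSum, hn] using congrArg (eval 1) h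

theorem natDegree_qIntP_le (n : ℕ) : (qIntP n).natDegree ≤ n - 1 :=
  natDegree_sum_le_of_forall_le _ _ fun i hi => by
    rw [natDegree_X_pow]; have := mem_range.mp hi; omega

theorem qIntP_eq_cyclotomic {p : ℕ} (hp : p.Prime) : qIntP p = cyclotomic p ℚ := by
  have := Fact.mk hp
  rw [cyclotomic_prime]; rfl

theorem isCoprime_qIntP_of_lt {p n : ℕ} (hp : p.Prime) (hn : n ≠ 0) (hnp : n < p) :
    IsCoprime (qIntP n) (qIntP p) := by
  rw [qIntP_eq_cyclotomic hp]
  refine ((cyclotomic.irreducible_rat hp.pos).coprime_iff_not_dvd.mpr fun hdvd => ?_).symm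
  have := natDegree_le_of_dvd hdvd (qIntP_ne_zero hn)
  rw [natDegree_cyclotomic, Nat.totient_prime hp] at this
  have := natDegree_qIntP_le n
  omega

theorem qN_ne_zero {n : ℕ} (hn : n ≠ 0) : qN n ≠ 0 :=
  (map_ne_zero_iff _ (RatFunc.algebraMap_injective ℚ)).mpr (qIntP_ne_zero hn)

theorem qqPoch_add (n k : ℕ) :
    qqPoch (n + k) = qqPoch n * FF ((1 - X) ^ k * ∏ j ∈ range k, qIntP (n + j + 1)) := by
  rw [qqPoch, qqPoch, prod_range_add, map_mul]
  simp only [← one_sub_X_mul_qIntP, prod_mul_distrib, prod_const, card_range, add_assoc]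

theorem qqPoch_ne_zero (n : ℕ) : qqPoch n ≠ 0 := by
  refine (map_ne_zero_iff _ (RatFunc.algebraMap_injective ℚ)).mpr (prod_ne_zero_iff.mpr ?_)
  intro j _ h
  simpa using congrArg natDegree (sub_eq_zero.mp h).symm

theorem qbin_add_left_mul (n k : ℕ) :
    qbin (n + k) k * FF (∏ j ∈ range k, qIntP (j + 1)) = FF (∏ j ∈ range k, qIntP (n + j + 1)) := by
  have hk : qqPoch k = FF ((1 - X) ^ k * ∏ j ∈ range k, qIntP (j + 1)) := by
    simpa [qqPoch] using qqPoch_add 0 k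
  have hk0 := qqPoch_ne_zero k
  rw [hk, map_mul] at hk0
  rw [qbin, if_pos (Nat.le_add_left k n), Nat.add_sub_cancel, qqPoch_add n k, hk, map_mul,
    map_mul, div_mul_eq_mul_div, div_eq_iff (mul_ne_zero hk0 (qqPoch_ne_zero n))]
  ring

theorem qbin_sub_one_add_succ_mul {p : ℕ} (hp : p ≠ 0) (m : ℕ) :
    qbin (p - 1 + (m + 1)) (m + 1) * FF (qIntP (m + 1) * ∏ i ∈ Icc 1 m, qIntP i) =
      FF (qIntP p * ∏ i ∈ Icc 1 m, (qIntP i + qIntP p * X ^ i)) := by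
  have hden : ∏ j ∈ range (m + 1), qIntP (j + 1) = qIntP (m + 1) * ∏ i ∈ Icc 1 m, qIntP i := by
    rw [prod_range_succ, mul_comm, range_eq_Ico, prod_Ico_add', zero_add, Ico_add_one_right_eq_Icc]
  have hshift : ∀ j, qIntP (p - 1 + j + 1) = qIntP j + qIntP p * X ^ j := fun j => by
    rw [show p - 1 + j + 1 = j + p by omega, qIntP_add, mul_comm]
  rw [← hden, qbin_add_left_mul]
  simp only [prod_range_eq_mul_Ico _ (Nat.add_one_pos m), Ico_add_one_right_eq_Icc, hshift, qIntP_zero,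
    pow_zero, mul_one, zero_add]

theorem qN_div_mul_one_add_sum_mul (n m : ℕ) :
    qN n / qN (m + 1) * (1 + qN n * ∑ j ∈ Icc 1 m, RatFunc.X ^ j / qN j) *
        FF (qIntP (m + 1) * ∏ i ∈ Icc 1 m, qIntP i) =
      FF (qIntP n * (∏ i ∈ Icc 1 m, qIntP i +
        qIntP n * ∑ j ∈ Icc 1 m, X ^ j * ∏ i ∈ (Icc 1 m).erase j, qIntP i)) := by
  have hsum := sum_div_mul_prod (Icc 1 m) (RatFunc.X ^ ·) qN fun i hi => qN_ne_zero (by grind)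
  have hm := qN_ne_zero m.succ_ne_zero
  simp only [qN, map_mul, map_add, map_sum, map_prod, map_pow, RatFunc.algebraMap_X] at hsum hm ⊢
  rw [← hsum]
  field_simp

theorem qCong_of_mul_eq {p r : ℕ} {x y : RatFunc ℚ} {b u v c : ℚ[X]} (hb : IsCoprime b (qIntP p))
    (hx : x * FF b = FF u) (hy : y * FF b = FF v) (huv : u = v + qIntP p ^ r * c) :
    qCong p r x y :=
  ⟨c, b, hb, by rw [sub_mul, hx, hy, huv, map_add]; ring⟩

/-- For a prime `p` and `1 ≤ k ≤ p-1`: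
`binom_q(p−1+k, k) ≡ ([p]_q/[k]_q)(1 + [p]_q ∑_{j=1}^{k-1} q^j/[j]_q) (mod [p]_q³)`. -/
theorem qbin_p_sub_one_add (p : ℕ) (hp : p.Prime)
    (k : ℕ) (hk1 : 1 ≤ k) (hk : k ≤ p - 1) :
    qCong p 3 (qbin (p - 1 + k) k)
      (qN p / qN k *
        (1 + qN p * ∑ j ∈ Finset.Icc 1 (k - 1), (RatFunc.X : RatFunc ℚ) ^ j / qN j)) := by
  obtain ⟨m, rfl⟩ : ∃ m, k = m + 1 := ⟨k - 1, by omega⟩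
  rw [Nat.add_sub_cancel]
  have hcop : IsCoprime (qIntP (m + 1) * ∏ i ∈ Icc 1 m, qIntP i) (qIntP p) :=
    (isCoprime_qIntP_of_lt hp m.succ_ne_zero (by omega)).mul_left <| IsCoprime.prod_left
      fun i hi => isCoprime_qIntP_of_lt hp (by grind) (by grind)
  obtain ⟨c, hc⟩ := exists_prod_add_mul_eq (Icc 1 m) qIntP (X ^ ·) (qIntP p)
  exact qCong_of_mul_eq (c := c) hcop (qbin_sub_one_add_succ_mul hp.ne_zero m)
    (qN_div_mul_one_add_sum_mul p m) (by rw [hc]; ring)
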